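/- arXiv:math/0305132 — 2 statements merged into one kernel-verified Lean document; each statement's English description precedes it below -/
import Mathlib

section
/- Let A ⊆ ℝ² be a Delone set, i.e. there exists c > 0 such that |p − p'| ≥ c for all distinct p, p' ∈ A, and there exists C > 0 such that every axis-parallel square of side length R ≥ 1 contains at least C·R² points of A. Then for (Lebesgue-)almost every (a₁, a₂, φ) ∈ [1,2] × [1,2] × [0,π], the following holds: for every ε > 0 there exists a constant C'_ε > 0 such that for all R ≥ 1, the cardinality of Δ_{a,φ}(A ∩ [−R,R]²) is at least C'_ε · R^{2−ε}. -/
open MeasureTheory Set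
open scoped ENNReal

noncomputable section

/-- The plane with the Euclidean norm. -/
abbrev Plane := EuclideanSpace ℝ (Fin 2)

/-- Anisotropic planeDil `δ_a(x₁,x₂) = (a₁x₁, a₂x₂)`. -/
def planeDil (a : ℝ × ℝ) (x : Plane) : Plane := WithLp.toLp 2 ![a.1 * x 0, a.2 * x 1]

/-- Rotation of the plane by the angle `φ`. -/
def planeRot (φ : ℝ) (x : Plane) : Plane :=
  WithLp.toLp 2 ![Real.cos φ * x 0 - Real.sin φ * x 1, Real.sin φ * x 0 + Real.cos φ * x 1]

/-- The ellipse-norm `‖x‖_{a,φ} = |δ_a(ρ_φ x)|`. -/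
def ellipseNorm (a : ℝ × ℝ) (φ : ℝ) (x : Plane) : ℝ := ‖planeDil a (planeRot φ x)‖

/-- The distance set `Δ_{a,φ}(E)`. -/
def ellipseDistSet (a : ℝ × ℝ) (φ : ℝ) (E : Set Plane) : Set ℝ :=
  {d | ∃ x ∈ E, ∃ y ∈ E, d = ellipseNorm a φ (x - y)}

/-- The unit square `[0,1]²`. -/
def unitSquare : Set Plane := {x | ∀ i, x i ∈ Set.Icc (0 : ℝ) 1}

/-- An axis-parallel square with lower-left corner `x` and side length `R`. -/
def axisSquare (x : Plane) (R : ℝ) : Set Plane := {y | ∀ i, y i ∈ Set.Icc (x i) (x i + R)}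

/-- The quadratic form whose square root is the ellipse norm. -/
def Qf (p : ℝ × ℝ × ℝ) (v : Plane) : ℝ :=
  p.1 ^ 2 * (Real.cos p.2.2 * v 0 - Real.sin p.2.2 * v 1) ^ 2
    + p.2.1 ^ 2 * (Real.sin p.2.2 * v 0 + Real.cos p.2.2 * v 1) ^ 2

lemma Qf_nonneg (p : ℝ × ℝ × ℝ) (v : Plane) : 0 ≤ Qf p v := by
  unfold Qf; positivity

lemma ellipseNorm_eq (p : ℝ × ℝ × ℝ) (v : Plane) :
    ellipseNorm (p.1, p.2.1) p.2.2 v = Real.sqrt (Qf p v) := by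
  unfold ellipseNorm
  rw [EuclideanSpace.norm_eq]
  congr 1
  simp only [planeDil, planeRot, Qf, Fin.sum_univ_two, Real.norm_eq_abs, sq_abs, PiLp.toLp_apply,
    Matrix.cons_val_zero, Matrix.cons_val_one, Matrix.head_cons]
  ring

lemma countable_cos_eq (c : ℝ) : Set.Countable {θ : ℝ | Real.cos θ = c} := by
  rcases Set.eq_empty_or_nonempty {θ : ℝ | Real.cos θ = c} with h | ⟨θ₀, hθ₀⟩
  · rw [h]; exact Set.countable_empty
  · have hsub : {θ : ℝ | Real.cos θ = c} ⊆
        ⋃ k : ℤ, ({2 * k * Real.pi + θ₀, 2 * k * Real.pi - θ₀} : Set ℝ) := by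
      intro θ hθ
      have h1 : Real.cos θ₀ = Real.cos θ := by
        rw [hθ₀]; exact hθ.symm
      obtain ⟨k, hk⟩ := Real.cos_eq_cos_iff.mp h1
      exact Set.mem_iUnion.2 ⟨k, by rcases hk with hk | hk <;> simp [hk]⟩
    exact Set.Countable.mono hsub
      (Set.countable_iUnion fun k => ((Set.finite_singleton _).insert _).countable)

lemma countable_trig_zero (α β γ : ℝ) (h : ¬(α = 0 ∧ β = 0 ∧ γ = 0)) :
    Set.Countable {φ : ℝ | α + β * Real.cos (2 * φ) + γ * Real.sin (2 * φ) = 0} := by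
  by_cases hbg : β = 0 ∧ γ = 0
  · obtain ⟨hb, hg⟩ := hbg
    have hα : α ≠ 0 := fun h0 => h ⟨h0, hb, hg⟩
    have : {φ : ℝ | α + β * Real.cos (2 * φ) + γ * Real.sin (2 * φ) = 0} = ∅ := by
      ext φ; simp [hb, hg, hα]
    rw [this]; exact Set.countable_empty
  · set r := Real.sqrt (β ^ 2 + γ ^ 2) with hrdef
    have hbg2 : 0 < β ^ 2 + γ ^ 2 := by
      rcases not_and_or.mp hbg with hb | hg
      · positivity
      · positivity
    have hr : 0 < r := Real.sqrt_pos.2 hbg2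
    set z : ℂ := ⟨β, γ⟩ with hz
    have hz0 : z ≠ 0 := by
      intro h0
      apply hbg
      constructor
      · have := congrArg Complex.re h0; simpa using this
      · have := congrArg Complex.im h0; simpa using this
    have habs : ‖z‖ = r := by
      rw [Complex.norm_def, Complex.normSq_mk, hrdef]
      ring_nf
    have hcos : Real.cos (Complex.arg z) = β / r := by
      rw [Complex.cos_arg hz0, habs]
    have hsin : Real.sin (Complex.arg z) = γ / r := by
      rw [Complex.sin_arg, habs]
    set ψ := Complex.arg z
    have key : ∀ φ : ℝ, β * Real.cos (2 * φ) + γ * Real.sin (2 * φ)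
        = r * Real.cos (2 * φ - ψ) := by
      intro φ
      rw [Real.cos_sub, hcos, hsin]
      field_simp
    have hsub : {φ : ℝ | α + β * Real.cos (2 * φ) + γ * Real.sin (2 * φ) = 0} ⊆
        (fun θ => (θ + ψ) / 2) '' {θ : ℝ | Real.cos θ = -α / r} := by
      intro φ hφ
      refine ⟨2 * φ - ψ, ?_, by ring⟩
      have hφ' : α + β * Real.cos (2 * φ) + γ * Real.sin (2 * φ) = 0 := hφ
      have h0 : α + r * Real.cos (2 * φ - ψ) = 0 := by
        have hk := key φ; linarith
      show Real.cos (2 * φ - ψ) = -α / r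
      rw [eq_div_iff hr.ne']
      linarith
    exact Set.Countable.mono hsub ((countable_cos_eq _).image _)

lemma Qf_continuous (v : Plane) : Continuous fun p : ℝ × ℝ × ℝ => Qf p v := by
  unfold Qf
  fun_prop

lemma nullPair (v w : Plane) (hvw : v ≠ w) (hvw' : v ≠ -w) :
    (volume : Measure (ℝ × ℝ × ℝ)) {p | Qf p v = Qf p w} = 0 := by
  have hmeas : MeasurableSet {p : ℝ × ℝ × ℝ | Qf p v = Qf p w} :=
    measurableSet_eq_fun (Qf_continuous v).measurable (Qf_continuous w).measurable
  rw [MeasureTheory.Measure.volume_eq_prod, MeasureTheory.Measure.measure_prod_null hmeas]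
  refine Filter.Eventually.of_forall fun a => ?_
  have hm1 : MeasurableSet (Prod.mk a ⁻¹' {p : ℝ × ℝ × ℝ | Qf p v = Qf p w}) :=
    hmeas.preimage measurable_prodMk_left
  show (volume : Measure (ℝ × ℝ)) _ = 0
  rw [MeasureTheory.Measure.volume_eq_prod, MeasureTheory.Measure.measure_prod_null hm1]
  have hb : ∀ᵐ b : ℝ ∂volume, b ≠ a ∧ b ≠ -a := by
    have h1 : (volume : Measure ℝ) {b : ℝ | ¬(b ≠ a ∧ b ≠ -a)} = 0 := by
      have : {b : ℝ | ¬(b ≠ a ∧ b ≠ -a)} ⊆ {a, -a} := by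
        intro b hb
        rcases not_and_or.mp hb with h | h <;> simp at h <;> simp [h]
      exact measure_mono_null this (Set.Countable.measure_zero
        ((Set.finite_singleton _).insert _).countable _)
    exact ae_iff.mpr h1
  filter_upwards [hb] with b hbne
  obtain ⟨hba, hbna⟩ := hbne
  set α : ℝ := ((a ^ 2 + b ^ 2) / 2) * (v 0 ^ 2 + v 1 ^ 2 - w 0 ^ 2 - w 1 ^ 2) with hα
  set β : ℝ := ((a ^ 2 - b ^ 2) / 2) * ((v 0 ^ 2 - v 1 ^ 2) - (w 0 ^ 2 - w 1 ^ 2)) with hβ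
  set γ : ℝ := -(a ^ 2 - b ^ 2) * (v 0 * v 1 - w 0 * w 1) with hγ
  have hab : a ^ 2 - b ^ 2 ≠ 0 := by
    intro h0
    rcases mul_eq_zero.mp (show (a - b) * (a + b) = 0 by linarith [sq_abs a]; ) with h | h
    · exact hba (by linarith)
    · exact hbna (by linarith)
  have hne : ¬(α = 0 ∧ β = 0 ∧ γ = 0) := by
    rintro ⟨h1, h2, h3⟩
    have hab2 : (0 : ℝ) < a ^ 2 + b ^ 2 := by
      rcases lt_or_ge 0 (a ^ 2 + b ^ 2) with h | h
      · exact h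
      · exfalso; apply hab; nlinarith [sq_nonneg a, sq_nonneg b]
    have e1 : v 0 ^ 2 + v 1 ^ 2 = w 0 ^ 2 + w 1 ^ 2 := by
      have := mul_eq_zero.mp h1
      rcases this with h | h
      · exact absurd h (by positivity)
      · linarith
    have hhalf : (a ^ 2 - b ^ 2) / 2 ≠ 0 := div_ne_zero hab two_ne_zero
    have e2 : v 0 ^ 2 - v 1 ^ 2 = w 0 ^ 2 - w 1 ^ 2 := by
      have := (mul_eq_zero.mp h2).resolve_left hhalf
      linarith
    have e3 : v 0 * v 1 = w 0 * w 1 := by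
      have := (mul_eq_zero.mp h3).resolve_left (neg_ne_zero.mpr hab)
      linarith
    have f1 : v 0 ^ 2 = w 0 ^ 2 := by linarith
    have f2 : v 1 ^ 2 = w 1 ^ 2 := by linarith
    have g1 : v 0 = w 0 ∨ v 0 = -w 0 := by
      rcases mul_eq_zero.mp (show (v 0 - w 0) * (v 0 + w 0) = 0 by linear_combination f1) with h | h
      · left; linarith
      · right; linarith
    have g2 : v 1 = w 1 ∨ v 1 = -w 1 := by
      rcases mul_eq_zero.mp (show (v 1 - w 1) * (v 1 + w 1) = 0 by linear_combination f2) with h | h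
      · left; linarith
      · right; linarith
    -- conclude
    have hW : (v 0 = w 0 ∧ v 1 = w 1) ∨ (v 0 = -w 0 ∧ v 1 = -w 1) := by
      rcases g1 with h01 | h01 <;> rcases g2 with h11 | h11
      · exact Or.inl ⟨h01, h11⟩
      · -- v0 = w0, v1 = -w1 : then w0*w1 = 0
        have h00 : w 0 * w 1 = 0 := by
          have he := e3; rw [h01, h11] at he; linear_combination (-1/2 : ℝ) * he
        rcases mul_eq_zero.mp h00 with h | h
        · exact Or.inr ⟨by rw [h01, h]; ring, h11⟩
        · exact Or.inl ⟨h01, by rw [h11, h]; ring⟩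
      · have h00 : w 0 * w 1 = 0 := by
          have he := e3; rw [h01, h11] at he; linear_combination (-1/2 : ℝ) * he
        rcases mul_eq_zero.mp h00 with h | h
        · exact Or.inl ⟨by rw [h01, h]; ring, h11⟩
        · exact Or.inr ⟨h01, by rw [h11, h]; ring⟩
      · exact Or.inr ⟨h01, h11⟩
    rcases hW with ⟨h01, h11⟩ | ⟨h01, h11⟩
    · apply hvw
      apply PiLp.ext; intro i
      fin_cases i
      · exact h01
      · exact h11
    · apply hvw'
      apply PiLp.ext; intro i
      fin_cases i
      · exact h01
      · exact h11
  have hsub : (Prod.mk b ⁻¹' (Prod.mk a ⁻¹' {p : ℝ × ℝ × ℝ | Qf p v = Qf p w})) ⊆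
      {φ : ℝ | α + β * Real.cos (2 * φ) + γ * Real.sin (2 * φ) = 0} := by
    intro φ hφ
    have h1 : a ^ 2 * (Real.cos φ * v 0 - Real.sin φ * v 1) ^ 2
        + b ^ 2 * (Real.sin φ * v 0 + Real.cos φ * v 1) ^ 2
        = a ^ 2 * (Real.cos φ * w 0 - Real.sin φ * w 1) ^ 2
        + b ^ 2 * (Real.sin φ * w 0 + Real.cos φ * w 1) ^ 2 := hφ
    show α + β * Real.cos (2 * φ) + γ * Real.sin (2 * φ) = 0
    rw [Real.cos_two_mul, Real.sin_two_mul, hα, hβ, hγ]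
    have hpy := Real.sin_sq_add_cos_sq φ
    linear_combination h1 - (b ^ 2 * (v 0 ^ 2 - w 0 ^ 2) + a ^ 2 * (v 1 ^ 2 - w 1 ^ 2)) * hpy
  exact measure_mono_null hsub ((countable_trig_zero α β γ hne).measure_zero _)

theorem random_erdos_distance (A : Set Plane)
    (hsep : ∃ c > 0, ∀ p ∈ A, ∀ p' ∈ A, p ≠ p' → c ≤ ‖p - p'‖)
    (hdense : ∃ C > 0, ∀ (x : Plane) (R : ℝ), 1 ≤ R →
      C * R ^ 2 ≤ ((A ∩ axisSquare x R).ncard : ℝ)) :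
    ∀ᵐ p : ℝ × ℝ × ℝ ∂(volume : Measure (ℝ × ℝ × ℝ)),
      p ∈ Set.Icc (1 : ℝ) 2 ×ˢ Set.Icc (1 : ℝ) 2 ×ˢ Set.Icc (0 : ℝ) Real.pi →
        ∀ ε > (0 : ℝ), ∃ C' > (0 : ℝ), ∀ R : ℝ, 1 ≤ R →
          C' * R ^ (2 - ε) ≤
            ((ellipseDistSet (p.1, p.2.1) p.2.2
                (A ∩ {y | ∀ i, y i ∈ Set.Icc (-R) R})).ncard : ℝ) := by
  classical
  obtain ⟨C, hC, hdense⟩ := hdense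
  -- every intersection with a square is finite
  have hfin : ∀ (x : Plane) (R : ℝ), 1 ≤ R → (A ∩ axisSquare x R).Finite := by
    intro x R hR
    by_contra hinf
    have h0 : (A ∩ axisSquare x R).ncard = 0 := Set.Infinite.ncard hinf
    have hle := hdense x R hR
    rw [h0] at hle
    have hR0 : (0 : ℝ) < R := lt_of_lt_of_le one_pos hR
    simp only [Nat.cast_zero] at hle
    nlinarith [mul_pos hC (pow_pos hR0 2)]
  -- A is countable
  have hAc : A.Countable := by
    have hcover : A ⊆ ⋃ n : ℕ, A ∩ axisSquare (WithLp.toLp 2 fun _ => -(n + 1 : ℝ)) (2 * (n + 1)) := by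
      intro x hx
      set n : ℕ := Nat.ceil (max |x 0| |x 1|) with hn
      refine Set.mem_iUnion.2 ⟨n, hx, fun i => ?_⟩
      have h1 : |x i| ≤ (n : ℝ) := by
        have : max |x 0| |x 1| ≤ (n : ℝ) := Nat.le_ceil _
        fin_cases i
        · exact le_trans (le_max_left _ _) this
        · exact le_trans (le_max_right _ _) this
      obtain ⟨ha, hb⟩ := abs_le.mp h1
      constructor
      · show -((n : ℝ) + 1) ≤ x i
        linarith
      · show x i ≤ -((n : ℝ) + 1) + 2 * ((n : ℝ) + 1)
        linarith
    refine Set.Countable.mono hcover (Set.countable_iUnion fun n => ?_)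
    exact (hfin _ _ (by linarith [Nat.cast_nonneg (α := ℝ) n])).countable
  -- the countable set of difference vectors
  have hDc : Set.Countable {v : Plane | ∃ x ∈ A, ∃ y ∈ A, v = x - y} := by
    have hDeq : {v : Plane | ∃ x ∈ A, ∃ y ∈ A, v = x - y}
        = Set.image2 (fun x y => x - y) A A := by
      ext v
      simp only [Set.mem_setOf_eq, Set.mem_image2]
      constructor
      · rintro ⟨x, hx, y, hy, rfl⟩; exact ⟨x, hx, y, hy, rfl⟩
      · rintro ⟨x, hx, y, hy, rfl⟩; exact ⟨x, hx, y, hy, rfl⟩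
    rw [hDeq]
    exact Set.Countable.image2 hAc hAc _
  -- almost every parameter is injective on differences (up to sign)
  have hae : ∀ᵐ p : ℝ × ℝ × ℝ ∂(volume : Measure (ℝ × ℝ × ℝ)),
      ∀ v ∈ {v : Plane | ∃ x ∈ A, ∃ y ∈ A, v = x - y},
      ∀ w ∈ {v : Plane | ∃ x ∈ A, ∃ y ∈ A, v = x - y},
      Qf p v = Qf p w → v = w ∨ v = -w := by
    rw [MeasureTheory.ae_ball_iff hDc]
    intro v hv
    rw [MeasureTheory.ae_ball_iff hDc]
    intro w hw
    by_cases h1 : v = w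
    · exact Filter.Eventually.of_forall fun _ _ => Or.inl h1
    by_cases h2 : v = -w
    · exact Filter.Eventually.of_forall fun _ _ => Or.inr h2
    refine ae_iff.mpr (measure_mono_null ?_ (nullPair v w h1 h2))
    intro p hp
    rw [Set.mem_setOf_eq, Classical.not_imp] at hp
    exact hp.1
  filter_upwards [hae] with p hp hbox ε hε
  refine ⟨C, hC, fun R hR => ?_⟩
  have hR0 : (0 : ℝ) < R := lt_of_lt_of_le one_pos hR
  have h2R : (1 : ℝ) ≤ 2 * R := by linarith
  -- identify the centered square with an axis-parallel square
  have hcoord : ∀ i : Fin 2, (WithLp.toLp 2 ![-R, -R] : Plane) i = -R := by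
    intro i; fin_cases i <;> simp
  have hSeq : A ∩ {y : Plane | ∀ i, y i ∈ Set.Icc (-R) R}
      = A ∩ axisSquare (WithLp.toLp 2 ![-R, -R]) (2 * R) := by
    ext y
    constructor
    · rintro ⟨hyA, hy⟩
      refine ⟨hyA, fun i => ?_⟩
      have h := hy i
      rw [hcoord i]
      exact ⟨h.1, by linarith [h.2]⟩
    · rintro ⟨hyA, hy⟩
      refine ⟨hyA, fun i => ?_⟩
      have h := hy i
      rw [hcoord i] at h
      exact ⟨h.1, by linarith [h.2]⟩
  set S := A ∩ {y : Plane | ∀ i, y i ∈ Set.Icc (-R) R} with hSdef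
  have hfinS : S.Finite := by
    rw [hSeq]; exact hfin _ _ h2R
  have hcard : C * (2 * R) ^ 2 ≤ (S.ncard : ℝ) := by
    rw [hSeq]; exact hdense _ _ h2R
  have hSne : S.Nonempty := by
    rw [← Set.ncard_pos hfinS]
    have h1 : (0 : ℝ) < C * (2 * R) ^ 2 := by positivity
    have h2 : (0 : ℝ) < (S.ncard : ℝ) := lt_of_lt_of_le h1 hcard
    exact_mod_cast h2
  obtain ⟨y₀, hy₀⟩ := hSne
  set g : Plane → ℝ := fun x => ellipseNorm (p.1, p.2.1) p.2.2 (x - y₀) with hg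
  have himg : g '' S ⊆ ellipseDistSet (p.1, p.2.1) p.2.2 S := by
    rintro d ⟨x, hx, rfl⟩
    exact ⟨x, hx, y₀, hy₀, rfl⟩
  have hΔfin : (ellipseDistSet (p.1, p.2.1) p.2.2 S).Finite := by
    have hde : ellipseDistSet (p.1, p.2.1) p.2.2 S
        = Set.image2 (fun x y => ellipseNorm (p.1, p.2.1) p.2.2 (x - y)) S S := by
      ext d
      simp only [ellipseDistSet, Set.mem_setOf_eq, Set.mem_image2]
      constructor
      · rintro ⟨x, hx, y, hy, rfl⟩; exact ⟨x, hx, y, hy, rfl⟩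
      · rintro ⟨x, hx, y, hy, rfl⟩; exact ⟨x, hx, y, hy, rfl⟩
    rw [hde]
    exact Set.Finite.image2 _ hfinS hfinS
  set F := hfinS.toFinset with hF
  have hmemF : ∀ x, x ∈ F ↔ x ∈ S := fun x => hfinS.mem_toFinset
  have hkey : F.card ≤ 2 * (F.image g).card := by
    apply Finset.card_le_mul_card_image
    intro d hd
    rcases Finset.eq_empty_or_nonempty (F.filter fun z => g z = d) with he | ⟨x, hxf⟩
    · rw [he]; simp
    · have hxS : x ∈ S := (hmemF x).1 (Finset.mem_filter.mp hxf).1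
      have hgx : g x = d := (Finset.mem_filter.mp hxf).2
      have hsub2 : (F.filter fun z => g z = d) ⊆ {x, y₀ + (y₀ - x)} := by
        intro x' hx'
        obtain ⟨hx'F, hgx'⟩ := Finset.mem_filter.mp hx'
        have hx'S : x' ∈ S := (hmemF x').1 hx'F
        have hQ : Qf p (x - y₀) = Qf p (x' - y₀) := by
          have e1 : Real.sqrt (Qf p (x - y₀)) = Real.sqrt (Qf p (x' - y₀)) := by
            rw [← ellipseNorm_eq, ← ellipseNorm_eq]
            show g x = g x'
            rw [hgx, hgx']
          exact (Real.sqrt_inj (Qf_nonneg _ _) (Qf_nonneg _ _)).mp e1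
        have hvw := hp (x - y₀) ⟨x, hxS.1, y₀, hy₀.1, rfl⟩
          (x' - y₀) ⟨x', hx'S.1, y₀, hy₀.1, rfl⟩ hQ
        rcases hvw with h | h
        · have hxx : x = x' := sub_left_inj.mp h
          simp [Finset.mem_insert, hxx.symm]
        · have h0 : (x - y₀) + (x' - y₀) = 0 := by rw [h]; exact neg_add_cancel _
          have hxx : x' = y₀ + (y₀ - x) := by
            rw [← sub_eq_zero]
            calc x' - (y₀ + (y₀ - x)) = (x - y₀) + (x' - y₀) := by abel
              _ = 0 := h0
          simp [Finset.mem_insert, hxx]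
      calc (F.filter fun z => g z = d).card
          ≤ ({x, y₀ + (y₀ - x)} : Finset Plane).card := Finset.card_le_card hsub2
        _ ≤ 2 := le_trans (Finset.card_insert_le _ _) (by simp)
  have hc1 : (S.ncard : ℝ) ≤ 2 * ((g '' S).ncard : ℝ) := by
    have e1 : S.ncard = F.card := Set.ncard_eq_toFinset_card S hfinS
    have e2 : (g '' S).ncard = (F.image g).card := by
      rw [Set.ncard_eq_toFinset_card (g '' S) (hfinS.image g)]
      congr 1
      exact Set.Finite.toFinset_image _ _ _
    rw [e1, e2]
    exact_mod_cast hkey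
  have hc2 : ((g '' S).ncard : ℝ) ≤ ((ellipseDistSet (p.1, p.2.1) p.2.2 S).ncard : ℝ) := by
    exact_mod_cast Set.ncard_le_ncard himg hΔfin
  have hrpow : R ^ (2 - ε) ≤ R ^ (2 : ℕ) := by
    rw [← Real.rpow_natCast R 2]
    exact Real.rpow_le_rpow_of_exponent_le hR (by push_cast; linarith)
  calc C * R ^ (2 - ε) ≤ C * R ^ 2 := mul_le_mul_of_nonneg_left hrpow hC.le
    _ ≤ (S.ncard : ℝ) / 2 := by nlinarith [mul_nonneg hC.le (sq_nonneg R)]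
    _ ≤ ((g '' S).ncard : ℝ) := by linarith
    _ ≤ _ := hc2
end
end

section
/- There is an absolute constant C > 0 with the following property: for all real numbers c₁, c₂ with (c₁, c₂) ≠ (0,0) and all ε > 0, the two-dimensional Lebesgue measure of the set {(a₁, a₂) ∈ [1/2, 4]² : |c₁·a₁² + c₂·a₂²| ≤ ε} is at most C·ε / max(|c₁|, |c₂|). In particular, for vectors u, v ∈ ℝ² with (u₁², u₂²) ≠ (v₁², v₂²), the Lebesgue measure of {(a₁,a₂) ∈ [1/2, 4]² : | |δ_a u|² − |δ_a v|² | ≤ ε} is at most C·ε / max(|u₁² − v₁²|, |u₂² − v₂²|). -/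
open MeasureTheory Set
open scoped ENNReal

noncomputable section

/-- The set of `x ∈ [1/2, 4]` whose square lies in `[l, u]` has measure at most `u - l`. -/
lemma slice_sq (l u : ℝ) (hlu : l ≤ u) :
    volume {x : ℝ | x ∈ Icc (1/2:ℝ) 4 ∧ x^2 ∈ Icc l u} ≤ ENNReal.ofReal (u - l) := by
  set L := max l (1/4 : ℝ) with hLdef
  set U := max u (1/4 : ℝ) with hUdef
  have hL0 : (0:ℝ) ≤ L := le_trans (by norm_num) (le_max_right _ _)
  have hU0 : (0:ℝ) ≤ U := le_trans (by norm_num) (le_max_right _ _)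
  have hsub : {x : ℝ | x ∈ Icc (1/2:ℝ) 4 ∧ x^2 ∈ Icc l u} ⊆ Icc (Real.sqrt L) (Real.sqrt U) := by
    rintro x ⟨⟨hx1, hx2⟩, hl, hu⟩
    have hxsq : Real.sqrt (x^2) = x := Real.sqrt_sq (by linarith)
    constructor
    · calc Real.sqrt L ≤ Real.sqrt (x^2) :=
            Real.sqrt_le_sqrt (max_le hl (by nlinarith))
        _ = x := hxsq
    · calc x = Real.sqrt (x^2) := hxsq.symm
        _ ≤ Real.sqrt U := Real.sqrt_le_sqrt (le_trans hu (le_max_left _ _))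
  refine le_trans (measure_mono hsub) ?_
  rw [Real.volume_Icc]
  refine ENNReal.ofReal_le_ofReal ?_
  have h14 : Real.sqrt (1/4 : ℝ) = 1/2 := by
    rw [show (1/4:ℝ) = (1/2)^2 by norm_num, Real.sqrt_sq (by norm_num)]
  have hLhalf : (1/2:ℝ) ≤ Real.sqrt L := by
    calc (1/2:ℝ) = Real.sqrt (1/4) := h14.symm
      _ ≤ Real.sqrt L := Real.sqrt_le_sqrt (le_max_right _ _)
  have hUL : Real.sqrt L ≤ Real.sqrt U := Real.sqrt_le_sqrt (max_le_max hlu le_rfl)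
  have h1 : Real.sqrt U ^ 2 = U := Real.sq_sqrt hU0
  have h2 : Real.sqrt L ^ 2 = L := Real.sq_sqrt hL0
  have hmax : U - L ≤ u - l := by
    rcases max_cases u (1/4:ℝ) with ⟨e1, e2⟩ | ⟨e1, e2⟩ <;>
      rcases max_cases l (1/4:ℝ) with ⟨e3, e4⟩ | ⟨e3, e4⟩ <;>
      simp only [hLdef, hUdef] <;> linarith
  nlinarith [mul_nonneg (sub_nonneg.2 hUL) (by linarith : (0:ℝ) ≤ Real.sqrt U + Real.sqrt L - 1)]

/-- One-dimensional slice estimate: the set of `x ∈ [1/2, 4]` with `|c x² + K| ≤ ε`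
has measure at most `2ε/|c|`. -/
lemma slice_abs (c K ε : ℝ) (hc : c ≠ 0) (hε : 0 ≤ ε) :
    volume {x : ℝ | x ∈ Icc (1/2:ℝ) 4 ∧ |c * x^2 + K| ≤ ε} ≤ ENNReal.ofReal (2 * ε / |c|) := by
  rcases lt_or_gt_of_ne hc with hneg | hpos
  · have hlu : (ε - K)/c ≤ (-ε - K)/c := by
      rw [div_le_div_right_of_neg hneg]; linarith
    have h2 : (-ε - K)/c - (ε - K)/c = 2 * ε / |c| := by
      rw [abs_of_neg hneg]
      field_simp
      ring_nf
    refine le_trans (measure_mono ?_) (le_of_le_of_eq (slice_sq _ _ hlu) (by rw [h2]))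
    rintro x ⟨hx, habs⟩
    rw [abs_le] at habs
    refine ⟨hx, ?_, ?_⟩
    · rw [div_le_iff_of_neg hneg]; nlinarith [habs.2]
    · rw [le_div_iff_of_neg hneg]; nlinarith [habs.1]
  · have hlu : (-K - ε)/c ≤ (-K + ε)/c := by
      rw [div_le_div_iff_of_pos_right hpos]; linarith
    have h2 : (-K + ε)/c - (-K - ε)/c = 2 * ε / |c| := by
      rw [abs_of_pos hpos]
      field_simp
      ring
    refine le_trans (measure_mono ?_) (le_of_le_of_eq (slice_sq _ _ hlu) (by rw [h2]))
    rintro x ⟨hx, habs⟩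
    rw [abs_le] at habs
    refine ⟨hx, ?_, ?_⟩
    · rw [div_le_iff₀ hpos]; nlinarith [habs.1]
    · rw [le_div_iff₀ hpos]; nlinarith [habs.2]

lemma box_meas (c₁ c₂ ε : ℝ) :
    MeasurableSet {p : ℝ × ℝ | p ∈ Icc (1/2:ℝ) 4 ×ˢ Icc (1/2:ℝ) 4 ∧
      |c₁ * p.1^2 + c₂ * p.2^2| ≤ ε} := by
  have hf : Measurable fun p : ℝ × ℝ => |c₁ * p.1 ^ 2 + c₂ * p.2 ^ 2| := by fun_prop
  exact (measurableSet_Icc.prod measurableSet_Icc).inter (measurableSet_le hf measurable_const)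

lemma key_snd (c₁ c₂ ε : ℝ) (hc : c₂ ≠ 0) (hε : 0 ≤ ε) :
    volume {p : ℝ × ℝ | p ∈ Icc (1/2:ℝ) 4 ×ˢ Icc (1/2:ℝ) 4 ∧ |c₁ * p.1^2 + c₂ * p.2^2| ≤ ε} ≤
      ENNReal.ofReal (7 * ε / |c₂|) := by
  set S := {p : ℝ × ℝ | p ∈ Icc (1/2:ℝ) 4 ×ˢ Icc (1/2:ℝ) 4 ∧ |c₁ * p.1^2 + c₂ * p.2^2| ≤ ε}
    with hS
  have hmeas := box_meas c₁ c₂ ε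
  rw [show (volume : Measure (ℝ × ℝ)) = (volume : Measure ℝ).prod volume from rfl,
    Measure.prod_apply hmeas]
  calc ∫⁻ x, volume (Prod.mk x ⁻¹' S) ∂volume
      ≤ ∫⁻ x, (Icc (1/2:ℝ) 4).indicator (fun _ => ENNReal.ofReal (2 * ε / |c₂|)) x ∂volume := by
        apply lintegral_mono
        intro x
        by_cases hx : x ∈ Icc (1/2:ℝ) 4
        · rw [indicator_of_mem hx]
          refine le_trans (measure_mono ?_) (slice_abs c₂ (c₁ * x^2) ε hc hε)
          rintro y ⟨⟨_, hy⟩, h⟩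
          exact ⟨hy, by rwa [add_comm] at h⟩
        · rw [indicator_of_notMem hx]
          have : Prod.mk x ⁻¹' S = ∅ := by
            ext y
            simp only [mem_preimage, hS, mem_setOf_eq, mem_prod, mem_empty_iff_false, iff_false]
            rintro ⟨⟨hx', _⟩, _⟩
            exact hx hx'
          simp [this]
    _ = ENNReal.ofReal (2 * ε / |c₂|) * volume (Icc (1/2:ℝ) 4) :=
        lintegral_indicator_const measurableSet_Icc _
    _ = ENNReal.ofReal (7 * ε / |c₂|) := by
        rw [Real.volume_Icc, ← ENNReal.ofReal_mul (by positivity)]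
        congr 1
        ring

lemma key_fst (c₁ c₂ ε : ℝ) (hc : c₁ ≠ 0) (hε : 0 ≤ ε) :
    volume {p : ℝ × ℝ | p ∈ Icc (1/2:ℝ) 4 ×ˢ Icc (1/2:ℝ) 4 ∧ |c₁ * p.1^2 + c₂ * p.2^2| ≤ ε} ≤
      ENNReal.ofReal (7 * ε / |c₁|) := by
  set S := {p : ℝ × ℝ | p ∈ Icc (1/2:ℝ) 4 ×ˢ Icc (1/2:ℝ) 4 ∧ |c₁ * p.1^2 + c₂ * p.2^2| ≤ ε}
    with hS
  have hmeas := box_meas c₁ c₂ ε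
  rw [show (volume : Measure (ℝ × ℝ)) = (volume : Measure ℝ).prod volume from rfl,
    Measure.prod_apply_symm hmeas]
  calc ∫⁻ y, volume ((fun x => (x, y)) ⁻¹' S) ∂volume
      ≤ ∫⁻ y, (Icc (1/2:ℝ) 4).indicator (fun _ => ENNReal.ofReal (2 * ε / |c₁|)) y ∂volume := by
        apply lintegral_mono
        intro y
        by_cases hy : y ∈ Icc (1/2:ℝ) 4
        · rw [indicator_of_mem hy]
          refine le_trans (measure_mono ?_) (slice_abs c₁ (c₂ * y^2) ε hc hε)
          rintro x ⟨⟨hx, _⟩, h⟩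
          exact ⟨hx, h⟩
        · rw [indicator_of_notMem hy]
          have : (fun x => (x, y)) ⁻¹' S = ∅ := by
            ext x
            simp only [mem_preimage, hS, mem_setOf_eq, mem_prod, mem_empty_iff_false, iff_false]
            rintro ⟨⟨_, hy'⟩, _⟩
            exact hy hy'
          simp [this]
    _ = ENNReal.ofReal (2 * ε / |c₁|) * volume (Icc (1/2:ℝ) 4) :=
        lintegral_indicator_const measurableSet_Icc _
    _ = ENNReal.ofReal (7 * ε / |c₁|) := by
        rw [Real.volume_Icc, ← ENNReal.ofReal_mul (by positivity)]
        congr 1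
        ring

lemma planeDil_norm_sq (a : ℝ × ℝ) (x : Plane) :
    ‖planeDil a x‖ ^ 2 = a.1 ^ 2 * (x 0) ^ 2 + a.2 ^ 2 * (x 1) ^ 2 := by
  rw [EuclideanSpace.norm_eq, Real.sq_sqrt (by positivity)]
  simp only [planeDil, Fin.sum_univ_two]
  rw [show (![a.1 * x 0, a.2 * x 1] : Fin 2 → ℝ) 0 = a.1 * x 0 from rfl,
    show (![a.1 * x 0, a.2 * x 1] : Fin 2 → ℝ) 1 = a.2 * x 1 from rfl]
  rw [Real.norm_eq_abs, Real.norm_eq_abs, sq_abs, sq_abs]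
  ring

theorem eccentricity_measure_estimate :
    ∃ C > (0 : ℝ),
      (∀ c₁ c₂ : ℝ, (c₁, c₂) ≠ ((0 : ℝ), (0 : ℝ)) → ∀ ε > (0 : ℝ),
        volume {p : ℝ × ℝ | p ∈ Set.Icc (1 / 2 : ℝ) 4 ×ˢ Set.Icc (1 / 2 : ℝ) 4 ∧
            |c₁ * p.1 ^ 2 + c₂ * p.2 ^ 2| ≤ ε} ≤
          ENNReal.ofReal (C * ε / max |c₁| |c₂|)) ∧
      (∀ u v : Plane, (u 0 ^ 2, u 1 ^ 2) ≠ (v 0 ^ 2, v 1 ^ 2) → ∀ ε > (0 : ℝ),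
        volume {a : ℝ × ℝ | a ∈ Set.Icc (1 / 2 : ℝ) 4 ×ˢ Set.Icc (1 / 2 : ℝ) 4 ∧
            |‖planeDil a u‖ ^ 2 - ‖planeDil a v‖ ^ 2| ≤ ε} ≤
          ENNReal.ofReal (C * ε / max |u 0 ^ 2 - v 0 ^ 2| |u 1 ^ 2 - v 1 ^ 2|)) := by
  have part1 : ∀ c₁ c₂ : ℝ, (c₁, c₂) ≠ ((0 : ℝ), (0 : ℝ)) → ∀ ε > (0 : ℝ),
      volume {p : ℝ × ℝ | p ∈ Set.Icc (1 / 2 : ℝ) 4 ×ˢ Set.Icc (1 / 2 : ℝ) 4 ∧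
          |c₁ * p.1 ^ 2 + c₂ * p.2 ^ 2| ≤ ε} ≤
        ENNReal.ofReal (7 * ε / max |c₁| |c₂|) := by
    intro c₁ c₂ hne ε hε
    rcases le_total |c₂| |c₁| with h | h
    · have hc₁ : c₁ ≠ 0 := by
        intro h0
        apply hne
        have : c₂ = 0 := by
          have := h.trans_eq (by rw [h0, abs_zero])
          exact abs_eq_zero.mp (le_antisymm this (abs_nonneg _))
        rw [h0, this]
      rw [max_eq_left h]
      exact key_fst c₁ c₂ ε hc₁ hε.le
    · have hc₂ : c₂ ≠ 0 := by
        intro h0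
        apply hne
        have : c₁ = 0 := by
          have := h.trans_eq (by rw [h0, abs_zero])
          exact abs_eq_zero.mp (le_antisymm this (abs_nonneg _))
        rw [h0, this]
      rw [max_eq_right h]
      exact key_snd c₁ c₂ ε hc₂ hε.le
  refine ⟨7, by norm_num, part1, ?_⟩
  intro u v hne ε hε
  set c₁ := u 0 ^ 2 - v 0 ^ 2 with hc₁
  set c₂ := u 1 ^ 2 - v 1 ^ 2 with hc₂
  have hne' : (c₁, c₂) ≠ ((0 : ℝ), (0 : ℝ)) := by
    intro h
    apply hne
    rw [Prod.mk.injEq] at h ⊢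
    constructor
    · have := h.1
      rw [hc₁, sub_eq_zero] at this
      exact this
    · have := h.2
      rw [hc₂, sub_eq_zero] at this
      exact this
  have hset : {a : ℝ × ℝ | a ∈ Set.Icc (1 / 2 : ℝ) 4 ×ˢ Set.Icc (1 / 2 : ℝ) 4 ∧
      |‖planeDil a u‖ ^ 2 - ‖planeDil a v‖ ^ 2| ≤ ε} =
      {p : ℝ × ℝ | p ∈ Set.Icc (1 / 2 : ℝ) 4 ×ˢ Set.Icc (1 / 2 : ℝ) 4 ∧
      |c₁ * p.1 ^ 2 + c₂ * p.2 ^ 2| ≤ ε} := by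
    ext p
    have : ‖planeDil p u‖ ^ 2 - ‖planeDil p v‖ ^ 2 = c₁ * p.1 ^ 2 + c₂ * p.2 ^ 2 := by
      rw [planeDil_norm_sq, planeDil_norm_sq, hc₁, hc₂]
      ring
    simp only [mem_setOf_eq, this]
  rw [hset]
  exact part1 c₁ c₂ hne' ε hε

end
end
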